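/- Monotonicity of isotonic regression ties under the search-collision structure: suppose y ∈ ℝ^d has y_j < y_{j+1} for all j ≠ k (so (k, k+1) is the only adjacent violation), and in the isotonic fit of y the tied block containing index k is {i*, …, j*} with i* ≤ k < j*. Define j(i) = argmin_{m ≥ i} avg(y_{i:m}) (largest minimizer). Then for i ≤ k: if i < i* then j(i) = i, and if i ≥ i* then j(i) > k. -/

import Mathlib

/-!
An isotonic fit `x` of `y` satisfies first-order optimality conditions: if `x` jumps strictly
upwards everywhere it leaves a set `S`, raising `x` slightly on `S` keeps it monotone, so
`∑_{s ∈ S} (x s - y s) ≥ 0`; dually for lowering. Applied to intervals at the two ends of the tied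
block `[i*, j*]` of level `c`, this gives `avg(y_{i*:m}) ≥ c` for all `m`, `avg(y_{t:j*}) ≤ c`,
and `y_i < c` for `i < i*` (where `y` increases).

For `i < i*`, the averages `avg(y_{i:m})` exceed `y_i`: before `i*` because `y` increases, and from
`i*` on because the block part averages at least `c > y_i`; hence `J i = i`. For `i* ≤ i ≤ k` and
`m ≤ k`, `avg(y_{i:m}) ≥ y_i ≥ y_{i*} ≥ c ≥ avg(y_{i:j*})`, so the largest minimizer exceeds `k`.
-/

open Finset Filter Topology

variable {ι : Type*}

def IsIsotonicRegression [Fintype ι] [Preorder ι] (y x : ι → ℝ) : Prop :=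
  Monotone x ∧ ∀ v : ι → ℝ, Monotone v → ∑ i, (x i - y i) ^ 2 ≤ ∑ i, (v i - y i) ^ 2

lemma tendsto_add_mul_nhdsGT_zero (a b : ℝ) :
    Tendsto (fun t : ℝ => a + t * b) (𝓝[>] 0) (𝓝 a) :=
  ((continuous_const.add (continuous_mul_const b)).tendsto' 0 a (by simp)).mono_left
    nhdsWithin_le_nhds

lemma eventually_monotone_add_mul [Preorder ι] [Finite ι] {x g : ι → ℝ} (hx : Monotone x)
    (hg : ∀ ⦃u v⦄, u ≤ v → g v < g u → x u < x v) :
    ∀ᶠ t in 𝓝[>] (0 : ℝ), Monotone fun i => x i + t * g i := by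
  have hpair : ∀ p : ι × ι, ∀ᶠ t in 𝓝[>] (0 : ℝ),
      p.1 ≤ p.2 → x p.1 + t * g p.1 ≤ x p.2 + t * g p.2 := by
    rintro ⟨u, v⟩
    rcases le_or_gt (g u) (g v) with hguv | hguv
    · filter_upwards [self_mem_nhdsWithin] with t (ht : 0 < t) huv
      exact add_le_add (hx huv) (mul_le_mul_of_nonneg_left hguv ht.le)
    · by_cases huv : u ≤ v
      · filter_upwards [(tendsto_add_mul_nhdsGT_zero _ _).eventually_lt
          (tendsto_add_mul_nhdsGT_zero _ _) (hg huv hguv)] with t ht _ using ht.le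
      · exact Eventually.of_forall fun _ h => absurd h huv
  filter_upwards [eventually_all.2 hpair] with t ht u v huv using ht (u, v) huv

namespace IsIsotonicRegression

variable [Fintype ι] [Preorder ι] {y x : ι → ℝ}

-- First-order optimality along directions `g` in which `x` stays monotone for small steps.
lemma sum_mul_nonneg (h : IsIsotonicRegression y x) {g : ι → ℝ}
    (hg : ∀ ⦃u v⦄, u ≤ v → g v < g u → x u < x v) : 0 ≤ ∑ i, (x i - y i) * g i := by
  set A := ∑ i, (x i - y i) * g i
  set B := ∑ i, g i ^ 2
  have hquad : ∀ᶠ t in 𝓝[>] (0 : ℝ), 0 ≤ 2 * A + t * B := by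
    filter_upwards [eventually_monotone_add_mul h.1 hg, self_mem_nhdsWithin]
      with t hmono (ht : 0 < t)
    have hexpand :
        ∑ i, (x i + t * g i - y i) ^ 2 = ∑ i, (x i - y i) ^ 2 + t * (2 * A + t * B) := by
      simp only [A, B, mul_sum, ← sum_add_distrib]
      exact sum_congr rfl fun i _ => by ring
    have := h.2 _ hmono
    exact nonneg_of_mul_nonneg_right (by linarith) ht
  linarith [ge_of_tendsto (tendsto_add_mul_nhdsGT_zero _ _) hquad]

lemma sum_sub_nonneg_of_forall_lt (h : IsIsotonicRegression y x) (S : Finset ι)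
    (hS : ∀ u ∈ S, ∀ v ∉ S, u ≤ v → x u < x v) : 0 ≤ ∑ i ∈ S, (x i - y i) := by
  classical
  have := h.sum_mul_nonneg (g := fun i => if i ∈ S then 1 else 0) fun u v huv hlt => by
    split_ifs at hlt <;> first | exact hS u ‹_› v ‹_› huv | norm_num at hlt
  simpa [mul_ite, sum_ite_mem] using this

lemma sum_sub_nonpos_of_forall_lt (h : IsIsotonicRegression y x) (S : Finset ι)
    (hS : ∀ u ∉ S, ∀ v ∈ S, u ≤ v → x u < x v) : ∑ i ∈ S, (x i - y i) ≤ 0 := by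
  classical
  have := h.sum_mul_nonneg (g := fun i => if i ∈ S then -1 else 0) fun u v huv hlt => by
    split_ifs at hlt <;> first | exact hS u ‹_› v ‹_› huv | norm_num at hlt
  simpa [mul_ite, sum_ite_mem] using this

end IsIsotonicRegression

namespace IsIsotonicRegression

variable [Fintype ι] [LinearOrder ι] [LocallyFiniteOrder ι] {y x : ι → ℝ} {a b t : ι} {c : ℝ}

lemma card_mul_le_sum_Icc (h : IsIsotonicRegression y x) (hxa : x a = c)
    (hlt : ∀ u < a, x u < c) (m : ι) : #(Icc a m) * c ≤ ∑ i ∈ Icc a m, y i := by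
  have hres := h.sum_sub_nonpos_of_forall_lt (Icc a m) fun u hu v hv huv =>
    have hua : u < a := lt_of_not_ge fun hau => hu (mem_Icc.2 ⟨hau, huv.trans (mem_Icc.1 hv).2⟩)
    (hlt u hua).trans_le (hxa ▸ h.1 (mem_Icc.1 hv).1)
  have hx : #(Icc a m) * c ≤ ∑ i ∈ Icc a m, x i := by
    simpa using card_nsmul_le_sum _ _ c fun i hi => hxa ▸ h.1 (mem_Icc.1 hi).1
  rw [sum_sub_distrib] at hres
  linarith

lemma sum_Icc_le_card_mul (h : IsIsotonicRegression y x) (hxb : x b = c)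
    (hgt : ∀ v, b < v → c < x v) (t : ι) : ∑ i ∈ Icc t b, y i ≤ #(Icc t b) * c := by
  have hres := h.sum_sub_nonneg_of_forall_lt (Icc t b) fun u hu v hv huv =>
    have hbv : b < v := lt_of_not_ge fun hvb => hv (mem_Icc.2 ⟨(mem_Icc.1 hu).1.trans huv, hvb⟩)
    (hxb ▸ h.1 (mem_Icc.1 hu).2).trans_lt (hgt v hbv)
  have hx : ∑ i ∈ Icc t b, x i ≤ #(Icc t b) * c := by
    simpa using sum_le_card_nsmul _ _ c fun i hi => hxb ▸ h.1 (mem_Icc.1 hi).2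
  rw [sum_sub_distrib] at hres
  linarith

lemma lt_of_monotoneOn_Ico (h : IsIsotonicRegression y x) (hxa : x a = c)
    (hlt : ∀ u < a, x u < c) (hta : t < a) (hy : MonotoneOn y (Set.Ico t a)) : y t < c := by
  have hres := h.sum_sub_nonneg_of_forall_lt (Ico t a) fun u hu v hv huv =>
    have hav : a ≤ v := le_of_not_gt fun hva => hv (mem_Ico.2 ⟨(mem_Ico.1 hu).1.trans huv, hva⟩)
    (hlt u (mem_Ico.1 hu).2).trans_le (hxa ▸ h.1 hav)
  have hne : (Ico t a).Nonempty := nonempty_Ico.2 hta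
  have hx : ∑ i ∈ Ico t a, x i < #(Ico t a) * c := by
    simpa using sum_lt_sum_of_nonempty hne fun i hi => hlt i (mem_Ico.1 hi).2
  have hyt : #(Ico t a) * y t ≤ ∑ i ∈ Ico t a, y i := by
    simpa using card_nsmul_le_sum _ _ (y t) fun i hi =>
      hy (Set.left_mem_Ico.2 hta) (coe_Ico t a ▸ hi) (mem_Ico.1 hi).1
  rw [sum_sub_distrib] at hres
  exact lt_of_mul_lt_mul_left (by linarith) (Nat.cast_nonneg _)

end IsIsotonicRegression

section IntervalAvg

variable [PartialOrder ι] [LocallyFiniteOrder ι] {y : ι → ℝ} {i m : ι} {r : ℝ}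

noncomputable def intervalAvg (y : ι → ℝ) (i m : ι) : ℝ := (∑ t ∈ Icc i m, y t) / #(Icc i m)

@[simp] lemma intervalAvg_self : intervalAvg y i i = y i := by simp [intervalAvg]

lemma card_Icc_pos (him : i ≤ m) : (0 : ℝ) < #(Icc i m) :=
  Nat.cast_pos.2 (card_pos.2 (nonempty_Icc.2 him))

lemma intervalAvg_le_iff (him : i ≤ m) :
    intervalAvg y i m ≤ r ↔ ∑ t ∈ Icc i m, y t ≤ #(Icc i m) * r := by
  rw [intervalAvg, div_le_iff₀ (card_Icc_pos him), mul_comm]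

lemma lt_intervalAvg_iff (him : i ≤ m) :
    r < intervalAvg y i m ↔ #(Icc i m) * r < ∑ t ∈ Icc i m, y t := by
  rw [intervalAvg, lt_div_iff₀ (card_Icc_pos him), mul_comm]

lemma le_intervalAvg (him : i ≤ m) (h : ∀ t ∈ Icc i m, r ≤ y t) : r ≤ intervalAvg y i m := by
  rw [intervalAvg, le_div_iff₀ (card_Icc_pos him), mul_comm]
  simpa using card_nsmul_le_sum _ _ r h

end IntervalAvg

lemma lt_intervalAvg_of_lt [LinearOrder ι] [LocallyFiniteOrder ι] {y : ι → ℝ} {i a m : ι} {c : ℝ}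
    (hia : i < a) (him : i < m) (hy : StrictMonoOn y (Set.Iio a)) (hyc : y i < c)
    (hsum : ∀ n, #(Icc a n) * c ≤ ∑ t ∈ Icc a n, y t) : y i < intervalAvg y i m := by
  rw [lt_intervalAvg_iff him.le]
  have hyi : ∀ t ∈ Icc i m, t < a → y i ≤ y t := fun t ht hta =>
    hy.monotoneOn (hia : i ∈ Set.Iio a) hta (mem_Icc.1 ht).1
  rcases lt_or_ge m a with hma | ham
  · simpa using sum_lt_sum (fun t ht => hyi t ht (((mem_Icc.1 ht).2).trans_lt hma))
      ⟨m, right_mem_Icc.2 him.le, hy (hia : i ∈ Set.Iio a) hma him⟩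
  · have hsplit : Ico i a ∪ Icc a m = Icc i m := by
      rw [← coe_inj]; push_cast; exact Set.Ico_union_Icc_eq_Icc hia.le ham
    have hdisj : Disjoint (Ico i a) (Icc a m) :=
      disjoint_left.2 fun t ht ht' => (mem_Ico.1 ht).2.not_ge (mem_Icc.1 ht').1
    have hleft : #(Ico i a) * y i ≤ ∑ t ∈ Ico i a, y t := by
      simpa using card_nsmul_le_sum _ _ (y i) fun t ht =>
        hyi t (hsplit ▸ mem_union_left _ ht) (mem_Ico.1 ht).2
    have hright : #(Icc a m) * y i < #(Icc a m) * c :=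
      mul_lt_mul_of_pos_left hyc (card_Icc_pos ham)
    rw [← hsplit, sum_union hdisj, card_union_of_disjoint hdisj, Nat.cast_add]
    linarith [hsum m]

lemma Fin.strictMonoOn_Iic_of_lt_add_one {β : Type*} [Preorder β] {d : ℕ} {y : Fin d → β}
    {k : Fin d}
    (h : ∀ (j : Fin d) (hj : (j : ℕ) + 1 < d), j < k → y j < y ⟨(j : ℕ) + 1, hj⟩) :
    StrictMonoOn y (Set.Iic k) :=
  strictMonoOn_Iic_of_lt_succ fun j hjk => by
    have hj : (j : ℕ) + 1 < d := by have := k.isLt; have : (j : ℕ) < k := hjk; omega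
    have hcov : j ⋖ ⟨(j : ℕ) + 1, hj⟩ := ⟨Fin.lt_def.2 (Nat.lt_succ_self _), fun c h1 h2 => by
      rw [Fin.lt_def] at h1 h2; simp at h2; omega⟩
    rw [hcov.succ_eq]
    exact h j hj hjk

theorem stmt17_general {d : ℕ} (y x : Fin d → ℝ) (k : Fin d)
    (hstrict : ∀ (j : Fin d) (hj : (j : ℕ) + 1 < d), j ≠ k → y j < y ⟨(j : ℕ) + 1, hj⟩)
    (hx : Monotone x)
    (hmin : ∀ v : Fin d → ℝ, Monotone v →
      ∑ i, (x i - y i)^2 ≤ ∑ i, (v i - y i)^2)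
    (istar jstar : Fin d) (hik : istar ≤ k) (hkj : k < jstar)
    (hblock : ∀ i : Fin d, x i = x k ↔ (istar ≤ i ∧ i ≤ jstar))
    (J : Fin d → Fin d)
    (hJ : ∀ i : Fin d, i ≤ J i ∧
      (∀ m : Fin d, i ≤ m →
        (∑ t ∈ Finset.Icc i (J i), y t) / ((Finset.Icc i (J i)).card : ℝ) ≤
          (∑ t ∈ Finset.Icc i m, y t) / ((Finset.Icc i m).card : ℝ)) ∧
      (∀ m : Fin d, i ≤ m →
        (∑ t ∈ Finset.Icc i m, y t) / ((Finset.Icc i m).card : ℝ) =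
          (∑ t ∈ Finset.Icc i (J i), y t) / ((Finset.Icc i (J i)).card : ℝ) →
        m ≤ J i)) :
    ∀ i : Fin d, i ≤ k → ((i < istar → J i = i) ∧ (istar ≤ i → k < J i)) := by
  have hfit : IsIsotonicRegression y x := ⟨hx, hmin⟩
  have hy : StrictMonoOn y (Set.Iic k) :=
    Fin.strictMonoOn_Iic_of_lt_add_one fun j hj hjk => hstrict j hj hjk.ne
  have hxa : x istar = x k := (hblock _).2 ⟨le_rfl, hik.trans hkj.le⟩
  have hxb : x jstar = x k := (hblock _).2 ⟨hik.trans hkj.le, le_rfl⟩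
  have hbelow : ∀ u < istar, x u < x k := fun u hu =>
    (hxa ▸ hx hu.le).lt_of_ne fun h => hu.not_ge ((hblock u).1 h).1
  have habove : ∀ v, jstar < v → x k < x v := fun v hv =>
    (hxb ▸ hx hv.le).lt_of_ne' fun h => hv.not_ge ((hblock v).1 h).2
  intro i hi
  refine ⟨fun hi_lt => ?_, fun hi_ge => ?_⟩
  · by_contra hne
    have hyi : y i < x k := hfit.lt_of_monotoneOn_Ico hxa hbelow hi_lt
      (hy.monotoneOn.mono fun t ht => ht.2.le.trans hik)
    have hlt := lt_intervalAvg_of_lt hi_lt ((hJ i).1.lt_of_ne' hne)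
      (hy.mono fun t ht => (Set.mem_Iio.1 ht).le.trans hik) hyi
      (hfit.card_mul_le_sum_Icc hxa hbelow)
    exact hlt.not_ge (((hJ i).2.1 i le_rfl).trans_eq intervalAvg_self)
  · by_contra! hJk
    have hij : i ≤ jstar := hi.trans hkj.le
    have hle : intervalAvg y i jstar ≤ intervalAvg y i (J i) := calc
      intervalAvg y i jstar ≤ x k :=
        (intervalAvg_le_iff hij).2 (hfit.sum_Icc_le_card_mul hxb habove i)
      _ ≤ y istar := by simpa using hfit.card_mul_le_sum_Icc hxa hbelow istar
      _ ≤ y i := hy.monotoneOn hik hi hi_ge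
      _ ≤ intervalAvg y i (J i) := le_intervalAvg (hJ i).1 fun t ht =>
        hy.monotoneOn hi ((mem_Icc.1 ht).2.trans hJk) (mem_Icc.1 ht).1
    exact hJk.not_gt (hkj.trans_le ((hJ i).2.2 jstar hij (le_antisymm hle ((hJ i).2.1 _ hij))))

theorem stmt17 {d : ℕ} (y x : Fin d → ℝ) (k : Fin d) (hk : (k : ℕ) + 1 < d)
    (hstrict : ∀ (j : Fin d) (hj : (j : ℕ) + 1 < d), j ≠ k → y j < y ⟨(j : ℕ) + 1, hj⟩)
    (hviol : y ⟨(k : ℕ) + 1, hk⟩ ≤ y k)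
    (hx : Monotone x)
    (hmin : ∀ v : Fin d → ℝ, Monotone v →
      ∑ i, (x i - y i)^2 ≤ ∑ i, (v i - y i)^2)
    (istar jstar : Fin d) (hik : istar ≤ k) (hkj : k < jstar)
    (hblock : ∀ i : Fin d, x i = x k ↔ (istar ≤ i ∧ i ≤ jstar))
    (J : Fin d → Fin d)
    (hJ : ∀ i : Fin d, i ≤ J i ∧
      (∀ m : Fin d, i ≤ m →
        (∑ t ∈ Finset.Icc i (J i), y t) / ((Finset.Icc i (J i)).card : ℝ) ≤
          (∑ t ∈ Finset.Icc i m, y t) / ((Finset.Icc i m).card : ℝ)) ∧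
      (∀ m : Fin d, i ≤ m →
        (∑ t ∈ Finset.Icc i m, y t) / ((Finset.Icc i m).card : ℝ) =
          (∑ t ∈ Finset.Icc i (J i), y t) / ((Finset.Icc i (J i)).card : ℝ) →
        m ≤ J i)) :
    ∀ i : Fin d, i ≤ k → ((i < istar → J i = i) ∧ (istar ≤ i → k < J i)) :=
  stmt17_general y x k hstrict hx hmin istar jstar hik hkj hblock J hJ
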